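/- For every λ ∈ Q', there exists a unique μ ∈ Q^- such that μ + ρ ∈ P^+ and μ = v∘λ for some v ∈ W. -/

import Mathlib

/-!
Write `ν = λ + ρ` and `M = ℤν + Q`. Since `λ ∈ Q'`, the orbit `W ν` lies in `ρ - Q⁺`.
Existence: reflecting `w ν` in a simple root on which it is negative lowers the height of
`ρ - w ν ∈ Q⁺`, so the orbit contains a dominant element.

Uniqueness rests on `x - w x ∈ Q⁺` for dominant `x ∈ M`, proved by induction on the length of a
word for `w` through the exchange condition on `M`. The exchange condition reduces to: if
`u α_i = c α_j` then `s_j u = u s_i` on `M`. The element `T = s_j u s_i u⁻¹ ∈ W` is a transvection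
`x ↦ x - d(x) α_j` with `d(α_j) = 0`; the root dichotomy for `T^{±1} α_k` forces `d(α_k) = 0`,
and boundedness of the orbit `{T^m ν}` forces `d(ν) = 0`, so `T` is the identity on `M`.
-/

open scoped Classical

noncomputable section

/-- An axiomatization of the root datum of a Kac--Moody algebra `𝔤` associated to an
`n × n` generalized Cartan matrix, realized on the lattice `V` of integral weights
(the subgroup of `𝔥*` spanned by the weight lattice `P`, the root lattice `Q` and a
Weyl vector).  `alpha i` are the simple roots, `pair i v = v(α_i^∨)` is the pairing
with the simple coroots, and `mult β = dim 𝔤_β` is the root multiplicity function.  -/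
structure KacMoody (n : ℕ) (V : Type) [AddCommGroup V] where
  /-- the simple roots `α_i` -/
  alpha : Fin n → V
  /-- the pairing with the simple coroots, `pair i v = v(α_i^∨)` -/
  pair : Fin n → V →+ ℤ
  /-- the diagonal entries of the generalized Cartan matrix `a_{ij} = pair i (alpha j)` are `2` -/
  pair_self : ∀ i, pair i (alpha i) = 2
  /-- the off-diagonal entries of the generalized Cartan matrix are nonpositive -/
  pair_offdiag : ∀ i j, i ≠ j → pair i (alpha j) ≤ 0
  /-- `a_{ij} = 0 → a_{ji} = 0` -/
  pair_zero_iff : ∀ i j, pair i (alpha j) = 0 → pair j (alpha i) = 0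
  /-- the simple roots are linearly independent -/
  indep : ∀ c : Fin n → ℤ, ∑ i, c i • alpha i = 0 → ∀ i, c i = 0
  /-- root multiplicities: `mult β = dim 𝔤_β`; `β ≠ 0` is a root iff `mult β ≠ 0` -/
  mult : V → ℕ
  /-- simple roots are roots of multiplicity one -/
  mult_simple : ∀ i, mult (alpha i) = 1
  /-- every root is positive or negative -/
  root_pm : ∀ β : V, mult β ≠ 0 → β ≠ 0 →
    (∃ c : Fin n → ℕ, β = ∑ i, c i • alpha i) ∨ (∃ c : Fin n → ℕ, β = -∑ i, c i • alpha i)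
  /-- multiplicities are invariant under the simple reflections (hence under the Weyl group) -/
  mult_reflect : ∀ (i) (v : V), mult (v - pair i v • alpha i) = mult v
  /-- a given `μ` admits only finitely many partitions into positive roots (counted
  with multiplicity); this is automatic for genuine Kac--Moody root systems -/
  part_finite : ∀ μ : V,
    {p : Finset (V × ℕ) |
      (∀ x ∈ p, (mult x.1 ≠ 0 ∧ x.1 ≠ 0 ∧ x.1 ∈ {v : V | ∃ c : Fin n → ℕ,
          v = ∑ i, c i • alpha i}) ∧ 1 ≤ x.2 ∧ x.2 ≤ mult x.1) ∧
        ∑ x ∈ p, x.1 = μ}.Finite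

/-- the group structure on additive automorphisms that older Mathlib provided
(`AddAut.group`, multiplication is composition) -/
instance addAutGroupOld (A : Type*) [Add A] : Group (AddAut A) where
  mul g h := AddEquiv.trans h g
  one := AddEquiv.refl _
  inv := AddEquiv.symm
  mul_assoc _ _ _ := rfl
  one_mul _ := rfl
  mul_one _ := rfl
  inv_mul_cancel := AddEquiv.self_trans_symm

namespace KacMoody

variable {n : ℕ} {V : Type} [AddCommGroup V] (K : KacMoody n V)

/-- the positive root cone `Q⁺` (the `ℕ`-span of the simple roots) -/
def QP : Set V := {v | ∃ c : Fin n → ℕ, v = ∑ i, c i • K.alpha i}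

/-- `β` is a positive root of `𝔤` -/
def IsPosRoot (β : V) : Prop := K.mult β ≠ 0 ∧ β ≠ 0 ∧ β ∈ K.QP

/-- the underlying function of the simple reflection `s_i` -/
def sAux (i : Fin n) : V → V := fun v => v - K.pair i v • K.alpha i

lemma sAux_add (i : Fin n) (a b : V) : K.sAux i (a + b) = K.sAux i a + K.sAux i b := by
  simp only [sAux, map_add, add_smul]; abel

lemma sAux_invol (i : Fin n) : Function.Involutive (K.sAux i) := by
  intro v
  simp only [sAux, map_sub, map_zsmul, K.pair_self i, smul_eq_mul]
  have h2 : K.pair i v - K.pair i v * 2 = -(K.pair i v) := by ring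
  rw [h2, neg_smul, sub_neg_eq_add]
  abel

/-- the simple reflection `s_i`, as an automorphism of the weight lattice -/
def s (i : Fin n) : AddAut V :=
  { toFun := K.sAux i
    invFun := K.sAux i
    left_inv := K.sAux_invol i
    right_inv := K.sAux_invol i
    map_add' := K.sAux_add i }

/-- the Weyl group `W` of `𝔤`, realized as the subgroup of `Aut(𝔥*)` generated by the
simple reflections -/
def Wgrp : Subgroup (AddAut V) := Subgroup.closure (Set.range K.s)

/-- the length `ℓ(w)` of an element of the Weyl group: the minimal length of an
expression of `w` as a product of simple reflections -/
def len (w : AddAut V) : ℕ :=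
  sInf {k | ∃ l : List (Fin n), l.length = k ∧ (l.map K.s).prod = w}

/-- the set `P⁺` of dominant integral weights -/
def Pplus : Set V := {v | ∀ i, 0 ≤ K.pair i v}

/-- `β` is a real root: it is `W`-conjugate to a simple root -/
def IsRealRoot (β : V) : Prop := ∃ w ∈ K.Wgrp, ∃ i, w (K.alpha i) = β

/-- `β` is an imaginary root: a root that is not real -/
def IsImRoot (β : V) : Prop := K.mult β ≠ 0 ∧ β ≠ 0 ∧ ¬K.IsRealRoot β

/-- the cone `Q⁻_im` generated by the negative imaginary roots -/
def coneIm : Set V :=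
  (AddSubmonoid.closure {v : V | K.IsImRoot v ∧ -v ∈ K.QP} : AddSubmonoid V)

/-- the element of `Q⁺` with coordinates `c` in the basis of simple roots -/
def toV (c : Fin n →₀ ℕ) : V := ∑ i, c i • K.alpha i

/-- the coordinates of an element of `Q⁺` in the basis of simple roots -/
def coordOf (v : V) : Fin n →₀ ℕ :=
  if h : ∃ c : Fin n →₀ ℕ, K.toV c = v then h.choose else 0

/-- `p` is an admissible partition of `μ`: a finite subset of
`𝒫 = {(α, i) : α ∈ Φ⁺, 1 ≤ i ≤ mult α}` whose parts sum to `μ` -/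
def IsPart (μ : V) (p : Finset (V × ℕ)) : Prop :=
  (∀ x ∈ p, (K.mult x.1 ≠ 0 ∧ x.1 ≠ 0 ∧ x.1 ∈ K.QP) ∧ 1 ≤ x.2 ∧ x.2 ≤ K.mult x.1) ∧
    ∑ x ∈ p, x.1 = μ

lemma isPart_finite (μ : V) : {p : Finset (V × ℕ) | K.IsPart μ p}.Finite := K.part_finite μ

/-- the finite set `𝒫(μ)` of admissible partitions of `μ` -/
def partsFinset (μ : V) : Finset (Finset (V × ℕ)) := (K.isPart_finite μ).toFinset

/-- the Kim--Lee function `H(μ; q) = Σ_{𝔭 ∈ 𝒫(μ)} (-q)^{|𝔭|}`, i.e. the coefficient of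
`e^{-μ}` in `Π_{α ∈ Φ⁺} (1 - q e^{-α})^{mult α}` -/
def H (μ : V) : Polynomial ℤ := ∑ p ∈ K.partsFinset μ, (-Polynomial.X) ^ p.card

/-- the Weyl denominator `Π_{α ∈ Φ⁺} (1 - e^{-α})^{mult α}`, expanded as a formal sum;
the coefficient at `c` is the coefficient of `e^{-toV c}` -/
def den : MvPowerSeries (Fin n) ℤ :=
  fun c => ∑ p ∈ K.partsFinset (K.toV c), (-1 : ℤ) ^ p.card

/-- `ξ^λ = Σ_{w ∈ W} (-1)^{ℓ(w)} e^{w∘λ}` as a formal sum supported on `Q⁻`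
(for `λ ∈ Q'`); the coefficient at `c` is the coefficient of `e^{-toV c}` -/
def xiMv (ρ lam : V) : MvPowerSeries (Fin n) ℤ :=
  fun c => ∑ᶠ w ∈ {w : AddAut V | w ∈ K.Wgrp ∧ w (lam + ρ) - ρ = -K.toV c},
    (-1 : ℤ) ^ K.len w

/-- the Poincaré series `χ(q) = Σ_{w ∈ W} q^{ℓ(w)}` of the Weyl group -/
def chiPS : PowerSeries ℤ :=
  PowerSeries.mk fun k => (Nat.card {w : AddAut V | w ∈ K.Wgrp ∧ K.len w = k} : ℤ)

/-- the inversion set `Φ(w⁻¹) = {α ∈ Φ⁺ : wα < 0}` -/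
def Inversions (w : AddAut V) : Set V := {β | K.IsPosRoot β ∧ -(w β) ∈ K.QP}

/-- the number of inversions of `w`, counted with multiplicity -/
def NInv (w : AddAut V) : ℕ := ∑ᶠ β ∈ K.Inversions w, K.mult β

/-- a finite subset of `𝒫 = {(α, i) : α ∈ Φ⁺, 1 ≤ i ≤ mult α}` -/
def IsChoice (p : Finset (V × ℕ)) : Prop :=
  ∀ x ∈ p, K.IsPosRoot x.1 ∧ 1 ≤ x.2 ∧ x.2 ≤ K.mult x.1

/-- the formal sum expansion of `Δ^w`, the image of
`Δ = Π_{α ∈ Φ⁺} ((1 - q e^{-α})/(1 - e^{-α}))^{mult α}` under `w ∈ W`: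
`Δ^w = Π_{α ∈ Φ(w⁻¹)} ((q - e^{-α})/(1 - e^{-α})) ·
Π_{α ∈ Φ⁺ ∖ Φ(w⁻¹)} ((1 - q e^{-α})/(1 - e^{-α}))^{mult α}`, where numerators are
expanded by choosing a finite subset `pf.1` of `𝒫` and denominators by choosing a
finitely supported multiset `pf.2` on `𝒫`. -/
def deltaW (w : AddAut V) : MvPowerSeries (Fin n) (PowerSeries ℤ) :=
  fun c =>
    ∑ᶠ pf ∈ {pf : Finset (V × ℕ) × ((V × ℕ) →₀ ℕ) |
        K.IsChoice pf.1 ∧ (∀ x ∈ pf.2.support, K.IsPosRoot x.1 ∧ 1 ≤ x.2 ∧ x.2 ≤ K.mult x.1) ∧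
        (∑ x ∈ pf.1, x.1) + (pf.2.sum fun x k => k • x.1) = K.toV c},
      ((-1 : ℤ) ^ pf.1.card) •
        (PowerSeries.X : PowerSeries ℤ) ^
          (K.NInv w + (pf.1.filter fun x => x.1 ∉ K.Inversions w).card
            - (pf.1.filter fun x => x.1 ∈ K.Inversions w).card)

/-- the formal sum `ℳ(q) = Σ_{w ∈ W} Δ^w`, a formal sum supported on `Q⁻` with
coefficients in `ℤ[[q]]`; the coefficient at `c` is the coefficient of `e^{-toV c}` -/
def Mcal : MvPowerSeries (Fin n) (PowerSeries ℤ) :=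
  fun c => PowerSeries.mk fun m =>
    ∑ᶠ w ∈ {w : AddAut V | w ∈ K.Wgrp},
      PowerSeries.coeff m (MvPowerSeries.coeff c (K.deltaW w))

/-- `Q' = ⋂_{w ∈ W} w ∘ Q⁻`, where `∘` is the circle (dot) action `w ∘ λ = w(λ+ρ) - ρ` -/
def Qprime (ρ : V) : Set V := {v | ∀ w ∈ K.Wgrp, -(w (v + ρ) - ρ) ∈ K.QP}

/-- `ξ^λ = Σ_{w ∈ W} (-1)^{ℓ(w)} e^{w∘λ}` as a formal sum on all of `𝔥*`:
`xiFun ρ lam v` is the coefficient of `e^v` -/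
def xiFun (ρ lam : V) : V → ℤ :=
  fun v => ∑ᶠ w ∈ {w : AddAut V | w ∈ K.Wgrp ∧ w (lam + ρ) - ρ = v}, (-1 : ℤ) ^ K.len w

/-- the numerator `Σ_{w ∈ W} (-1)^{ℓ(w)} e^{w(λ+ρ)}` of `π^λ`, as a formal sum:
`numFun ρ lam v` is the coefficient of `e^v` -/
def numFun (ρ lam : V) : V → ℤ :=
  fun v => ∑ᶠ w ∈ {w : AddAut V | w ∈ K.Wgrp ∧ w (lam + ρ) = v}, (-1 : ℤ) ^ K.len w

/-- the map `φ_i : 𝒫(-λ) → 𝒫(-s_i ∘ λ)` on admissible partitions -/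
def phi (i : Fin n) (p : Finset (V × ℕ)) : Finset (V × ℕ) :=
  if ∃ x ∈ p, x.1 = K.alpha i then
    (p.filter fun x => x.1 ≠ K.alpha i).image fun x => (K.s i x.1, x.2)
  else insert (K.alpha i, 1) (p.image fun x => (K.s i x.1, x.2))

/-- `m(𝔭, w) = |𝔭| - 2 ⬝ #{(β, j) ∈ 𝔭 : wβ < 0}` -/
def mpw (w : AddAut V) (p : Finset (V × ℕ)) : ℤ :=
  (p.card : ℤ) - 2 * (p.filter fun x => -(w x.1) ∈ K.QP ∧ w x.1 ≠ 0).card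

/-- `|wβ|`: the positive root among `± wβ` -/
def wabs (w : AddAut V) (β : V) : V := if -(w β) ∈ K.QP then -(w β) else w β

/-- `Σ_{α ∈ Φ(w⁻¹)} mult α • (-wα)`, the forced monomial appearing when `w` acts on the
Weyl denominator -/
def invWt (w : AddAut V) : V := ∑ᶠ β ∈ K.Inversions w, K.mult β • (-(w β))

/-- the series part of the expansion of `w(Π_{α ∈ Φ⁺} (1 - e^{-α})^{mult α})`:
by the defining action `w(1 - e^{-α}) = 1 - e^{-wα}` if `wα > 0` and
`w(1 - e^{-α}) = (-e^{-wα})(1 - e^{wα})` if `wα < 0`, one has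
`w(Π_{α ∈ Φ⁺} (1 - e^{-α})^{mult α}) = (-1)^{NInv w} e^{invWt w} · wDen w`, where
`wDen w = Π_{α ∈ Φ⁺, (α,i) ∈ 𝒫} (1 - e^{-|wα|})`; the coefficient at `c` is the
coefficient of `e^{-toV c}` -/
def wDen (w : AddAut V) : MvPowerSeries (Fin n) ℤ :=
  fun c => ∑ᶠ p ∈ {p : Finset (V × ℕ) | K.IsChoice p ∧
      (∑ x ∈ p, K.wabs w x.1) = K.toV c},
    (-1 : ℤ) ^ p.card

/-- for a word `l = (i_1, …, i_ℓ)`, the root `s_{i_1} ⋯ s_{i_{k-1}} (α_{i_k})` -/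
def prefixRoot (l : List (Fin n)) (k : Fin l.length) : V :=
  ((l.take k).map K.s).prod (K.alpha (l.get k))

end KacMoody

namespace addAutGroupOld

variable {A : Type*}

@[simp] lemma mul_apply [Add A] (g h : AddAut A) (x : A) : (g * h) x = g (h x) := rfl

@[simp] lemma one_apply [Add A] (x : A) : (1 : AddAut A) x = x := rfl

@[simp] lemma inv_apply_self [Add A] (g : AddAut A) (x : A) : g⁻¹ (g x) = x :=
  g.symm_apply_apply x

@[simp] lemma apply_inv_self [Add A] (g : AddAut A) (x : A) : g (g⁻¹ x) = x :=
  g.apply_symm_apply x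

lemma zpow_apply_of_apply_eq_sub_zsmul [AddCommGroup A] {T : AddAut A} {d : A →+ ℤ} {a : A}
    (hT : ∀ x, T x = x - d x • a) (ha : d a = 0) (m : ℤ) (x : A) :
    (T ^ m) x = x - (m * d x) • a := by
  have hinv : ∀ y, T⁻¹ y = y + d y • a := fun y => by
    conv_lhs => rw [show y = T (y + d y • a) by simp [hT, ha]]
    exact inv_apply_self T _
  induction m using Int.induction_on generalizing x with
  | zero => simp
  | succ m ih =>
    simp only [zpow_add_one, mul_apply, ih, hT, map_sub, map_zsmul, ha, smul_zero, sub_zero]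
    module
  | pred m ih =>
    simp only [zpow_sub_one, mul_apply, ih, hinv, map_add, map_zsmul, ha, smul_zero, add_zero]
    module

end addAutGroupOld

open addAutGroupOld

namespace KacMoody

variable {n : ℕ} {V : Type} [AddCommGroup V] (K : KacMoody n V)

lemma s_apply (i : Fin n) (x : V) : K.s i x = x - K.pair i x • K.alpha i := rfl

lemma s_alpha_self (i : Fin n) : K.s i (K.alpha i) = -K.alpha i := by
  rw [s_apply, K.pair_self, two_zsmul]
  abel

@[simp] lemma s_s (i : Fin n) (x : V) : K.s i (K.s i x) = x := K.sAux_invol i x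

lemma s_inv (i : Fin n) : (K.s i)⁻¹ = K.s i := rfl

lemma s_mem (i : Fin n) : K.s i ∈ K.Wgrp := Subgroup.subset_closure ⟨i, rfl⟩

def rootComb : (Fin n → ℤ) →ₗ[ℤ] V := Fintype.linearCombination ℤ K.alpha

lemma rootComb_injective : Function.Injective K.rootComb :=
  linearIndependent_iff_injective_fintypeLinearCombination.mp
    (Fintype.linearIndependent_iff.mpr K.indep)

lemma rootComb_single (i : Fin n) (m : ℤ) : K.rootComb (Pi.single i m) = m • K.alpha i :=
  Fintype.linearCombination_apply_single ℤ K.alpha i m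

lemma mem_QP_iff {v : V} : v ∈ K.QP ↔ ∃ z, 0 ≤ z ∧ K.rootComb z = v := by
  simp only [QP, rootComb, Fintype.linearCombination_apply]
  constructor
  · rintro ⟨c, rfl⟩
    exact ⟨fun i => c i, fun i => Int.natCast_nonneg _, by simp [natCast_zsmul]⟩
  · rintro ⟨z, hz, rfl⟩
    refine ⟨fun i => (z i).toNat, Finset.sum_congr rfl fun i _ => ?_⟩
    rw [← natCast_zsmul, Int.toNat_of_nonneg (hz i)]

lemma rootComb_mem_QP_iff {z : Fin n → ℤ} : K.rootComb z ∈ K.QP ↔ 0 ≤ z := by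
  refine K.mem_QP_iff.trans ⟨?_, fun hz => ⟨z, hz, rfl⟩⟩
  rintro ⟨z', hz', h⟩
  rwa [← K.rootComb_injective h]

lemma zero_mem_QP : (0 : V) ∈ K.QP :=
  K.mem_QP_iff.mpr ⟨0, le_rfl, map_zero _⟩

lemma add_mem_QP {v w : V} (hv : v ∈ K.QP) (hw : w ∈ K.QP) : v + w ∈ K.QP := by
  obtain ⟨z, hz, rfl⟩ := K.mem_QP_iff.mp hv
  obtain ⟨y, hy, rfl⟩ := K.mem_QP_iff.mp hw
  rw [← map_add, rootComb_mem_QP_iff]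
  exact add_nonneg hz hy

lemma zsmul_mem_QP {v : V} (hv : v ∈ K.QP) {m : ℤ} (hm : 0 ≤ m) : m • v ∈ K.QP := by
  obtain ⟨z, hz, rfl⟩ := K.mem_QP_iff.mp hv
  rw [← map_zsmul, rootComb_mem_QP_iff]
  exact smul_nonneg hm hz

lemma eq_zero_of_mem_QP_of_neg_mem_QP {v : V} (hv : v ∈ K.QP) (hv' : -v ∈ K.QP) : v = 0 := by
  obtain ⟨z, hz, rfl⟩ := K.mem_QP_iff.mp hv
  rw [← map_neg, rootComb_mem_QP_iff, neg_nonneg] at hv'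
  rw [le_antisymm hv' hz, map_zero]

lemma alpha_ne_zero (i : Fin n) : K.alpha i ≠ 0 := by
  rw [← one_smul ℤ (K.alpha i), ← rootComb_single, ← map_zero K.rootComb,
    K.rootComb_injective.ne_iff]
  simp

lemma neg_alpha_not_mem_QP (i : Fin n) : -K.alpha i ∉ K.QP := by
  rw [← one_smul ℤ (K.alpha i), ← rootComb_single, ← map_neg, rootComb_mem_QP_iff]
  simpa [Pi.le_def] using ⟨i, by simp⟩

lemma exists_eq_zsmul_alpha_of_neg_s_apply_mem_QP {β : V} {j : Fin n} (hβ : β ∈ K.QP)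
    (hsβ : -(K.s j β) ∈ K.QP) : ∃ c : ℤ, β = c • K.alpha j := by
  obtain ⟨z, hz, rfl⟩ := K.mem_QP_iff.mp hβ
  have hs : -(K.s j (K.rootComb z)) = K.rootComb (-z + Pi.single j (K.pair j (K.rootComb z))) := by
    rw [map_add, map_neg, rootComb_single, s_apply]
    abel
  rw [hs, rootComb_mem_QP_iff] at hsβ
  refine ⟨z j, ?_⟩
  rw [← rootComb_single]
  congr 1
  funext k
  by_cases hkj : k = j
  · subst hkj; simp
  · have hzk : 0 ≤ -z k := by simpa [hkj] using hsβ k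
    simpa [hkj] using le_antisymm (neg_nonneg.mp hzk) (hz k)

lemma nonpos_of_alpha_sub_zsmul_alpha_mem_QP_or_neg {k j : Fin n} (hkj : k ≠ j) {e : ℤ}
    (h : K.alpha k - e • K.alpha j ∈ K.QP ∨ -(K.alpha k - e • K.alpha j) ∈ K.QP) : e ≤ 0 := by
  rw [← one_smul ℤ (K.alpha k), ← rootComb_single, ← rootComb_single, ← map_sub, ← map_neg,
    rootComb_mem_QP_iff, rootComb_mem_QP_iff] at h
  rcases h with h | h
  · simpa [hkj] using h j
  · simpa [hkj] using h k

lemma eq_zero_of_forall_add_zsmul_alpha_mem_QP {v : V} {j : Fin n} {e : ℤ}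
    (h : ∀ m : ℤ, v + (m * e) • K.alpha j ∈ K.QP) : e = 0 := by
  obtain ⟨z, hz, rfl⟩ := K.mem_QP_iff.mp (by simpa using h 0)
  have hj : ∀ m : ℤ, 0 ≤ z j + m * e := fun m => by
    have hm := h m
    rw [← rootComb_single, ← map_add, rootComb_mem_QP_iff] at hm
    simpa using hm j
  have hzj : 0 ≤ z j := hz j
  rcases lt_trichotomy e 0 with he | he | he
  · nlinarith [hj (z j + 1)]
  · exact he
  · nlinarith [hj (-(z j + 1))]

lemma Wgrp_induction_left {p : AddAut V → Prop} (one : p 1)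
    (s_mul : ∀ i w, p w → p (K.s i * w)) {w : AddAut V} (hw : w ∈ K.Wgrp) :
    p w := by
  induction hw using Subgroup.closure_induction_left with
  | one => exact one
  | mul_left x hx y _ ih =>
    obtain ⟨i, rfl⟩ := hx
    exact s_mul i y ih
  | inv_mul_cancel x hx y _ ih =>
    obtain ⟨i, rfl⟩ := hx
    rw [s_inv]
    exact s_mul i y ih

def word (l : List (Fin n)) : AddAut V := (l.map K.s).prod

@[simp] lemma word_nil : K.word [] = 1 := rfl

@[simp] lemma word_cons (j : Fin n) (l : List (Fin n)) : K.word (j :: l) = K.s j * K.word l :=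
  List.prod_cons

@[simp] lemma word_append (l l' : List (Fin n)) : K.word (l ++ l') = K.word l * K.word l' := by
  simp [word]

lemma word_mem (l : List (Fin n)) : K.word l ∈ K.Wgrp :=
  Subgroup.list_prod_mem _ fun _ hx => by
    obtain ⟨i, _, rfl⟩ := List.mem_map.mp hx
    exact K.s_mem i

lemma exists_word {w : AddAut V} (hw : w ∈ K.Wgrp) : ∃ l, K.word l = w :=
  K.Wgrp_induction_left (p := fun w => ∃ l, K.word l = w) ⟨[], rfl⟩
    (fun i _ ⟨l, hl⟩ => ⟨i :: l, by rw [word_cons, hl]⟩) hw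

lemma mult_map {w : AddAut V} (hw : w ∈ K.Wgrp) (x : V) : K.mult (w x) = K.mult x := by
  refine K.Wgrp_induction_left (p := fun w => ∀ x, K.mult (w x) = K.mult x) (fun _ => rfl)
    (fun i w ih x => ?_) hw x
  rw [mul_apply, s_apply, K.mult_reflect, ih]

lemma map_alpha_mem_QP_or_neg_mem_QP {w : AddAut V} (hw : w ∈ K.Wgrp) (i : Fin n) :
    w (K.alpha i) ∈ K.QP ∨ -(w (K.alpha i)) ∈ K.QP := by
  have hmult : K.mult (w (K.alpha i)) ≠ 0 := by simp [K.mult_map hw, K.mult_simple]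
  have hne : w (K.alpha i) ≠ 0 := w.map_ne_zero_iff.mpr (K.alpha_ne_zero i)
  rcases K.root_pm _ hmult hne with ⟨c, hc⟩ | ⟨c, hc⟩
  · exact Or.inl ⟨c, hc⟩
  · exact Or.inr ⟨c, by rw [hc, neg_neg]⟩

def rootLatticeWith (ν : V) : AddSubgroup V := AddSubgroup.closure (insert ν (Set.range K.alpha))

lemma mem_rootLatticeWith_self (ν : V) : ν ∈ K.rootLatticeWith ν :=
  AddSubgroup.subset_closure (Set.mem_insert ν _)

lemma alpha_mem_rootLatticeWith (ν : V) (i : Fin n) : K.alpha i ∈ K.rootLatticeWith ν :=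
  AddSubgroup.subset_closure (Set.mem_insert_of_mem ν ⟨i, rfl⟩)

lemma map_mem_rootLatticeWith {ν x : V} {w : AddAut V} (hw : w ∈ K.Wgrp)
    (hx : x ∈ K.rootLatticeWith ν) : w x ∈ K.rootLatticeWith ν := by
  refine K.Wgrp_induction_left (p := fun w => w x ∈ K.rootLatticeWith ν) hx
    (fun i w ih => ?_) hw
  rw [mul_apply, s_apply]
  exact sub_mem ih (zsmul_mem (K.alpha_mem_rootLatticeWith ν i) _)

section BoundedOrbit

variable {K} {ν b : V} (hν : ∀ w ∈ K.Wgrp, b - w ν ∈ K.QP)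
include hν

lemma exists_dominant : ∃ w ∈ K.Wgrp, w ν ∈ K.Pplus := by
  have hex : ∃ h : ℕ, ∃ w ∈ K.Wgrp, ∃ z, 0 ≤ z ∧ K.rootComb z = b - w ν ∧ ∑ k, z k = h := by
    obtain ⟨z, hz, hzb⟩ := K.mem_QP_iff.mp (hν 1 (one_mem _))
    exact ⟨(∑ k, z k).toNat, 1, one_mem _, z, hz, hzb,
      (Int.toNat_of_nonneg (Finset.sum_nonneg fun k _ => hz k)).symm⟩
  obtain ⟨w, hw, z, -, hzb, hzh⟩ := Nat.find_spec hex
  refine ⟨w, hw, fun i => not_lt.mp fun hi => ?_⟩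
  obtain ⟨z', hz', hz'b⟩ := K.mem_QP_iff.mp (hν _ (mul_mem (K.s_mem i) hw))
  -- reflecting in `α_i` lowers the height of `b - w ν` by `-⟨w ν, α_i^∨⟩ > 0`
  have hz'z : z' = z + Pi.single i (K.pair i (w ν)) := K.rootComb_injective <| by
    rw [hz'b, map_add, hzb, rootComb_single, mul_apply, s_apply]
    abel
  have hz'h : 0 ≤ ∑ k, z' k := Finset.sum_nonneg fun k _ => hz' k
  refine Nat.find_min hex (m := (∑ k, z' k).toNat) ?_
    ⟨_, mul_mem (K.s_mem i) hw, z', hz', hz'b, (Int.toNat_of_nonneg hz'h).symm⟩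
  have hsum : ∑ k, z' k = ∑ k, z k + K.pair i (w ν) := by
    simp [hz'z, Finset.sum_add_distrib]
  omega

variable {T : AddAut V} {d : V →+ ℤ} {j : Fin n}

lemma apply_eq_self_of_transvection (hT : T ∈ K.Wgrp) (hTd : ∀ x, T x = x - d x • K.alpha j)
    (hdj : d (K.alpha j) = 0) {x : V} (hx : x ∈ K.rootLatticeWith ν) : T x = x := by
  suffices K.rootLatticeWith ν ≤ d.ker by rw [hTd, this hx, zero_smul, sub_zero]
  have hpow := zpow_apply_of_apply_eq_sub_zsmul hTd hdj
  rw [rootLatticeWith, AddSubgroup.closure_le, Set.insert_subset_iff, Set.range_subset_iff]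
  refine ⟨K.eq_zero_of_forall_add_zsmul_alpha_mem_QP (v := b - ν) (j := j) fun m => ?_,
    fun k => ?_⟩
  · convert hν _ (zpow_mem hT m) using 1
    rw [hpow]
    abel
  · show d (K.alpha k) = 0
    obtain rfl | hkj := eq_or_ne k j
    · exact hdj
    have hle := K.nonpos_of_alpha_sub_zsmul_alpha_mem_QP_or_neg hkj <| by
      simpa only [hTd] using K.map_alpha_mem_QP_or_neg_mem_QP hT k
    have hge := K.nonpos_of_alpha_sub_zsmul_alpha_mem_QP_or_neg hkj (e := -d (K.alpha k)) <| by
      have := K.map_alpha_mem_QP_or_neg_mem_QP (zpow_mem hT (-1)) k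
      rwa [hpow, neg_one_mul] at this
    omega

lemma s_apply_map_eq_map_s_apply {u : AddAut V} (hu : u ∈ K.Wgrp) {i : Fin n} {c : ℤ}
    (hc : u (K.alpha i) = c • K.alpha j) {x : V} (hx : x ∈ K.rootLatticeWith ν) :
    K.s j (u x) = u (K.s i x) := by
  let d : V →+ ℤ := K.pair j - c • (K.pair i).comp (u⁻¹ : AddAut V).toAddMonoidHom
  have hd : ∀ y, d y = K.pair j y - c * K.pair i (u⁻¹ y) := fun _ => rfl
  have hdj : d (K.alpha j) = 0 := by
    have h2 : K.pair i (u⁻¹ (c • K.alpha j)) = 2 := by rw [← hc, inv_apply_self, K.pair_self]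
    rw [map_zsmul, map_zsmul, smul_eq_mul] at h2
    rw [hd, K.pair_self, h2, sub_self]
  have hT : ∀ y, (K.s j * u * K.s i * u⁻¹) y = y - d y • K.alpha j := fun y => by
    simp only [mul_apply, s_apply, map_sub, map_zsmul, apply_inv_self, hc, K.pair_self, hd]
    module
  have hTW : K.s j * u * K.s i * u⁻¹ ∈ K.Wgrp :=
    mul_mem (mul_mem (mul_mem (K.s_mem j) hu) (K.s_mem i)) (inv_mem hu)
  have := apply_eq_self_of_transvection hν hTW hT hdj
    (K.map_mem_rootLatticeWith hu (K.map_mem_rootLatticeWith (K.s_mem i) hx))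
  simpa only [mul_apply, inv_apply_self, s_s] using this

lemma exists_word_comp_s_eq_word :
    ∀ (l : List (Fin n)) (i : Fin n), -(K.word l (K.alpha i)) ∈ K.QP →
      ∃ l' : List (Fin n), l'.length + 1 = l.length ∧
        ∀ x ∈ K.rootLatticeWith ν, K.word l (K.s i x) = K.word l' x
  | [], i, h => absurd h (K.neg_alpha_not_mem_QP i)
  | j :: l, i, h => by
    rw [word_cons, mul_apply] at h
    rcases K.map_alpha_mem_QP_or_neg_mem_QP (K.word_mem l) i with hpos | hneg
    · obtain ⟨c, hc⟩ := K.exists_eq_zsmul_alpha_of_neg_s_apply_mem_QP hpos h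
      refine ⟨l, rfl, fun x hx => ?_⟩
      rw [word_cons, mul_apply, s_apply_map_eq_map_s_apply hν (K.word_mem l) hc
        (K.map_mem_rootLatticeWith (K.s_mem i) hx), s_s]
    · obtain ⟨l', hlen, hl'⟩ := exists_word_comp_s_eq_word l i hneg
      exact ⟨j :: l', by simp [hlen], fun x hx => by simp [hl' x hx]⟩

lemma sub_word_apply_mem_QP {x : V} (hx : x ∈ K.rootLatticeWith ν) (hdom : x ∈ K.Pplus)
    (l : List (Fin n)) : x - K.word l x ∈ K.QP := by
  rcases l.eq_nil_or_concat' with rfl | ⟨l, i, rfl⟩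
  · simpa using K.zero_mem_QP
  have hsplit : ∀ y, K.word (l ++ [i]) y = K.word l (K.s i y) := by simp
  rcases K.map_alpha_mem_QP_or_neg_mem_QP (K.word_mem l) i with hpos | hneg
  · obtain ⟨l', hlen, hl'⟩ := exists_word_comp_s_eq_word hν (l ++ [i]) i <| by
      rwa [hsplit, s_alpha_self, map_neg, neg_neg]
    have hα : K.word l' (K.alpha i) = K.word l (K.alpha i) := by
      rw [← hl' _ (K.alpha_mem_rootLatticeWith ν i), hsplit, s_s]
    have hx' : K.word (l ++ [i]) x = K.word l' x - K.pair i x • K.word l (K.alpha i) := by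
      rw [← s_s K i x, hl' _ (K.map_mem_rootLatticeWith (K.s_mem i) hx), s_s, K.s_apply i x,
        map_sub, map_zsmul, hα]
    -- `x - (w s_i) x ∈ Q⁺` by induction, and `(w s_i) x - w x = ⟨x, α_i^∨⟩ (-w α_i) ∈ Q⁺`
    rw [hx', sub_sub_eq_add_sub, add_sub_right_comm]
    exact K.add_mem_QP (sub_word_apply_mem_QP hx hdom l') (K.zsmul_mem_QP hpos (hdom i))
  · obtain ⟨l', hlen, hl'⟩ := exists_word_comp_s_eq_word hν l i hneg
    rw [hsplit, hl' x hx]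
    exact sub_word_apply_mem_QP hx hdom l'
termination_by l.length
decreasing_by
  all_goals subst_vars; simp only [List.length_append, List.length_singleton] at *; omega

lemma apply_eq_self_of_dominant {w : AddAut V} (hw : w ∈ K.Wgrp) {x : V}
    (hx : x ∈ K.rootLatticeWith ν) (hdom : x ∈ K.Pplus) (hwdom : w x ∈ K.Pplus) : w x = x := by
  obtain ⟨l, rfl⟩ := K.exists_word hw
  obtain ⟨l', hl'⟩ := K.exists_word (inv_mem hw)
  have h₁ := sub_word_apply_mem_QP hν hx hdom l
  have h₂ := sub_word_apply_mem_QP hν (K.map_mem_rootLatticeWith hw hx) hwdom l'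
  rw [hl', inv_apply_self] at h₂
  rw [← neg_sub] at h₂
  exact (sub_eq_zero.mp (K.eq_zero_of_mem_QP_of_neg_mem_QP h₁ h₂)).symm

end BoundedOrbit

end KacMoody

theorem unique_dominant_circle_representative_general
    (n : ℕ) (V : Type) [AddCommGroup V] (K : KacMoody n V)
    (ρ : V) :
    ∀ lam ∈ K.Qprime ρ,
      ∃! μ : V, -μ ∈ K.QP ∧ μ + ρ ∈ K.Pplus ∧ ∃ v ∈ K.Wgrp, v (lam + ρ) - ρ = μ := by
  intro lam hlam
  have hν : ∀ w ∈ K.Wgrp, ρ - w (lam + ρ) ∈ K.QP := fun w hw => by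
    simpa only [neg_sub] using hlam w hw
  obtain ⟨v, hv, hdom⟩ := K.exists_dominant hν
  refine ⟨v (lam + ρ) - ρ, ⟨hlam v hv, by rwa [sub_add_cancel], v, hv, rfl⟩, ?_⟩
  rintro _ ⟨-, hdom', v', hv', rfl⟩
  rw [sub_add_cancel] at hdom'
  have := K.apply_eq_self_of_dominant hν (mul_mem hv (inv_mem hv'))
    (K.map_mem_rootLatticeWith hv' (K.mem_rootLatticeWith_self _)) hdom' (by simpa using hdom)
  rw [mul_apply, inv_apply_self] at this
  rw [this]

/-- **Lemma (dominant representatives for the circle action).**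
For every `λ ∈ Q' = ⋂_{w ∈ W} w∘Q⁻`, there exists a unique `μ ∈ Q⁻` such that
`μ + ρ ∈ P⁺` and `μ = v∘λ` for some `v ∈ W`. -/
theorem unique_dominant_circle_representative
    (n : ℕ) (V : Type) [AddCommGroup V] (K : KacMoody n V)
    (ρ : V) (hρ : ∀ i, K.pair i ρ = 1) :
    ∀ lam ∈ K.Qprime ρ,
      ∃! μ : V, -μ ∈ K.QP ∧ μ + ρ ∈ K.Pplus ∧ ∃ v ∈ K.Wgrp, v (lam + ρ) - ρ = μ :=
  unique_dominant_circle_representative_general n V K ρ
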